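/- Every subgyrogroup of an ω-balanced paratopological gyrogroup is ω-balanced. -/

import Mathlib

open Pointwise

/-- A gyrogroup: a groupoid with identity, inverses, gyroautomorphisms satisfying
the left gyroassociative law and the left loop property. -/
class Gyrogroup (G : Type*) extends Zero G, Neg G, Add G where
  zero_add : ∀ a : G, 0 + a = a
  add_zero : ∀ a : G, a + 0 = a
  neg_add_cancel : ∀ a : G, -a + a = 0
  add_neg_cancel : ∀ a : G, a + -a = 0
  gyr : G → G → G → G
  gyr_bijective : ∀ a b : G, Function.Bijective (gyr a b)
  gyr_add : ∀ a b x y : G, gyr a b (x + y) = gyr a b x + gyr a b y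
  gyrassoc : ∀ a b c : G, a + (b + c) = a + b + gyr a b c
  loop : ∀ a b : G, gyr (a + b) b = gyr a b

/-- A family γ of neighborhoods of 0 is subordinated to U if for all x, y there are
members V₁, V₂ of γ with ⊖(x⊕y)⊕((V₁⊕x)⊕y) ⊆ U and V₂ ⊆ ⊖(x⊕y)⊕((U⊕x)⊕y). -/
def Subordinated {G : Type*} [Add G] [Neg G] (γ : Set (Set G)) (U : Set G) : Prop :=
  (∀ x y : G, ∃ V ∈ γ, {-(x + y)} + ((V + {x}) + {y}) ⊆ U) ∧
  (∀ x y : G, ∃ V ∈ γ, V ⊆ {-(x + y)} + ((U + {x}) + {y}))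

/-- A paratopological gyrogroup is ω-balanced if every neighborhood of the identity
has a countable subordinated family of open neighborhoods of the identity. -/
def OmegaBalanced (G : Type*) [Add G] [Neg G] [Zero G] [TopologicalSpace G] : Prop :=
  ∀ U ∈ nhds (0 : G), ∃ γ : Set (Set G), γ.Countable ∧
    (∀ V ∈ γ, IsOpen V ∧ (0 : G) ∈ V) ∧ Subordinated γ U

/-- A subgyrogroup of a gyrogroup. -/
structure Subgyrogroup (G : Type*) [Gyrogroup G] where
  carrier : Set G
  zero_mem : (0 : G) ∈ carrier
  add_mem : ∀ ⦃a b : G⦄, a ∈ carrier → b ∈ carrier → a + b ∈ carrier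
  neg_mem : ∀ ⦃a : G⦄, a ∈ carrier → -a ∈ carrier
  gyr_image : ∀ ⦃a b : G⦄, a ∈ carrier → b ∈ carrier →
    Gyrogroup.gyr a b '' carrier = carrier

instance {G : Type*} [Gyrogroup G] (K : Subgyrogroup G) : Zero K.carrier :=
  ⟨⟨0, K.zero_mem⟩⟩

instance {G : Type*} [Gyrogroup G] (K : Subgyrogroup G) : Add K.carrier :=
  ⟨fun a b => ⟨a.1 + b.1, K.add_mem a.2 b.2⟩⟩

instance {G : Type*} [Gyrogroup G] (K : Subgyrogroup G) : Neg K.carrier :=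
  ⟨fun a => ⟨-a.1, K.neg_mem a.2⟩⟩

/-!
For `x, y ∈ K`, taking traces on a subgyrogroup `K` commutes with the translates
`⊖(x ⊕ y) ⊕ ((W ⊕ x) ⊕ y)`. The nontrivial inclusion holds because
`⊖(x ⊕ y) ⊕ ((w ⊕ x) ⊕ y) ∈ K` forces `w ∈ K`: peel off `x ⊕ y`, then `y`, then `x`, using that
`K` is closed under `⊕`, `⊖` and the gyrations, together with the cancellation laws. Hence the
traces on `K` of a countable family subordinated to `W` are subordinated to every neighborhood
`U ⊇ W ∩ K` of `0` in `K`.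
-/

open Set

def gyroConj {G : Type*} [Add G] [Neg G] (x y : G) (S : Set G) : Set G :=
  {-(x + y)} + ((S + {x}) + {y})

section gyroConj

variable {α β : Type*} [Add α] [Neg α] [Add β] [Neg β]

theorem gyroConj_mono (x y : α) : Monotone (gyroConj x y) :=
  fun _ _ h => add_subset_add_left (add_subset_add_right (add_subset_add_right h))

theorem image_gyroConj (f : AddHom α β) (map_neg : ∀ a, f (-a) = -f a) (x y : α) (S : Set α) :
    f '' gyroConj x y S = gyroConj (f x) (f y) (f '' S) := by
  simp only [gyroConj, image_add, image_singleton, map_neg, map_add]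

end gyroConj

namespace Gyrogroup

variable {G : Type*} [Gyrogroup G]

theorem add_left_cancel {a x y : G} (h : a + x = a + y) : x = y := by
  have h' : gyr (-a) a x = gyr (-a) a y := by
    simpa only [gyrassoc, neg_add_cancel, zero_add] using congrArg (-a + ·) h
  exact (gyr_bijective (-a) a).1 h'

theorem gyr_zero_left (b c : G) : gyr 0 b c = c := by
  refine (add_left_cancel (a := 0 + b) ?_).symm
  rw [← gyrassoc, zero_add, zero_add]

theorem gyr_self_neg (a c : G) : gyr a (-a) c = c := by
  rw [← loop, add_neg_cancel, gyr_zero_left]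

theorem add_neg_add_cancel_left (a b : G) : a + (-a + b) = b := by
  rw [gyrassoc, add_neg_cancel, zero_add, gyr_self_neg]

theorem add_add_gyr_neg (a b : G) : (a + b) + gyr (a + b) b (-b) = a := by
  rw [loop, ← gyrassoc, add_neg_cancel, add_zero]

end Gyrogroup

namespace Subgyrogroup

open Gyrogroup

variable {G : Type*} [Gyrogroup G] (K : Subgyrogroup G)

def subtype : AddHom K.carrier G := ⟨Subtype.val, fun _ _ => rfl⟩

variable {K}

theorem gyr_mem {a b c : G} (ha : a ∈ K.carrier) (hb : b ∈ K.carrier) (hc : c ∈ K.carrier) :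
    gyr a b c ∈ K.carrier := by
  rw [← K.gyr_image ha hb]
  exact mem_image_of_mem _ hc

theorem mem_of_add_mem_right {a b : G} (hab : a + b ∈ K.carrier) (hb : b ∈ K.carrier) :
    a ∈ K.carrier := by
  rw [← add_add_gyr_neg a b]
  exact K.add_mem hab (gyr_mem hab hb (K.neg_mem hb))

theorem mem_of_neg_add_mem {a b : G} (ha : a ∈ K.carrier) (h : -a + b ∈ K.carrier) :
    b ∈ K.carrier := by
  rw [← add_neg_add_cancel_left a b]
  exact K.add_mem ha h

theorem inter_gyroConj_subset {x y : G} (hx : x ∈ K.carrier) (hy : y ∈ K.carrier) (S : Set G) :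
    K.carrier ∩ gyroConj x y S ⊆ gyroConj x y (K.carrier ∩ S) := by
  rintro _ ⟨hz, _, rfl, _, ⟨_, ⟨w, hw, _, rfl, rfl⟩, _, rfl, rfl⟩, rfl⟩
  have hw' : w ∈ K.carrier :=
    mem_of_add_mem_right (mem_of_add_mem_right (mem_of_neg_add_mem (K.add_mem hx hy) hz) hy) hx
  exact ⟨_, rfl, _, ⟨_, ⟨w, ⟨hw', hw⟩, _, rfl, rfl⟩, _, rfl, rfl⟩, rfl⟩

theorem preimage_val_gyroConj (x y : K.carrier) (S : Set G) :
    Subtype.val ⁻¹' gyroConj x.1 y.1 S = gyroConj x y (Subtype.val ⁻¹' S) := by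
  have himage :
      Subtype.val '' gyroConj x y (Subtype.val ⁻¹' S) = gyroConj x.1 y.1 (K.carrier ∩ S) := by
    rw [← Subtype.image_preimage_coe]
    exact image_gyroConj K.subtype (fun _ => rfl) x y _
  ext z
  constructor
  · intro hz
    rw [← Subtype.val_injective.mem_set_image, himage]
    exact inter_gyroConj_subset x.2 y.2 S ⟨z.2, hz⟩
  · intro hz
    exact gyroConj_mono _ _ inter_subset_right (himage ▸ mem_image_of_mem _ hz)

end Subgyrogroup

theorem omegaBalanced_subgyrogroup_general {G : Type*} [Gyrogroup G] [TopologicalSpace G]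
    (hG : OmegaBalanced G) (K : Subgyrogroup G) :
    OmegaBalanced K.carrier := by
  intro U hU
  obtain ⟨W, hW, hWU⟩ := (mem_nhds_subtype _ _ _).mp hU
  obtain ⟨γ, hγ_countable, hγ_open, hγ_small, hγ_large⟩ := hG W hW
  refine ⟨preimage Subtype.val '' γ, hγ_countable.image _, ?_, fun x y => ?_, fun x y => ?_⟩
  · rintro _ ⟨V, hV, rfl⟩
    exact ⟨(hγ_open V hV).1.preimage continuous_subtype_val, (hγ_open V hV).2⟩
  · obtain ⟨V, hV, hVW⟩ := hγ_small x y
    refine ⟨_, mem_image_of_mem _ hV, ?_⟩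
    show gyroConj x y _ ⊆ U
    rw [← Subgyrogroup.preimage_val_gyroConj]
    exact (preimage_mono hVW).trans hWU
  · obtain ⟨V, hV, hVW⟩ := hγ_large x y
    refine ⟨_, mem_image_of_mem _ hV, (preimage_mono hVW).trans ?_⟩
    show Subtype.val ⁻¹' gyroConj x.1 y.1 W ⊆ gyroConj x y U
    rw [Subgyrogroup.preimage_val_gyroConj]
    exact gyroConj_mono x y hWU

/-- Every subgyrogroup of an ω-balanced paratopological gyrogroup is ω-balanced. -/
theorem omegaBalanced_subgyrogroup {G : Type*} [Gyrogroup G] [TopologicalSpace G]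
    [ContinuousAdd G] (hG : OmegaBalanced G) (K : Subgyrogroup G) :
    OmegaBalanced K.carrier :=
  omegaBalanced_subgyrogroup_general hG K
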